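/- Fix J, N, K ∈ ℕ with J ≥ 1, 1 ≤ K ≤ N, K·J even and K·J ≥ 2, and fix ε > 0. Let F be the set of vectors β : Fin J × Fin N → ℝ such that there exist L ⊆ Fin N with |L| = K and disjoint sets A, B partitioning S = (Fin J) × L with |A| = |B| = KJ/2, β_{ij} = −ε for (i,j) ∈ A, β_{ij} = √(2/(KJ)) + ε for (i,j) ∈ B, and β_{ij} = 0 for (i,j) ∉ S. Then F is finite with cardinality exactly C(N,K) · C(KJ, KJ/2), and consequently (as real numbers) its cardinality is at least 2^{KJ/2} · (N/K)^K. -/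
import Mathlib


lemma two_pow_le_centralBinom : ∀ n : ℕ, 2 ^ n ≤ Nat.centralBinom n := by
  intro n
  induction n with
  | zero => simp [Nat.centralBinom_zero]
  | succ n ih =>
    have h := Nat.succ_mul_centralBinom_succ n
    have h2 : (n + 1) * (2 * Nat.centralBinom n) ≤ (n + 1) * Nat.centralBinom (n + 1) := by
      rw [h]; nlinarith [Nat.centralBinom_pos n]
    have h3 : 2 * Nat.centralBinom n ≤ Nat.centralBinom (n + 1) :=
      Nat.le_of_mul_le_mul_left h2 (Nat.succ_pos n)
    calc 2 ^ (n + 1) = 2 * 2 ^ n := by ring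
    _ ≤ 2 * Nat.centralBinom n := by omega
    _ ≤ _ := h3

lemma pow_div_le_choose : ∀ k n : ℕ, k ≤ n → ((n : ℝ) / k) ^ k ≤ n.choose k := by
  intro k
  induction k with
  | zero => intro n _; simp
  | succ k ih =>
    intro n hn
    obtain ⟨m, rfl⟩ : ∃ m, n = m + 1 := ⟨n - 1, by omega⟩
    have hkm : k ≤ m := by omega
    rcases Nat.eq_zero_or_pos k with rfl | hk
    · simp [Nat.choose_one_right]
    have ihm := ih m hkm
    have hkR : (1:ℝ) ≤ (k:ℝ) := by exact_mod_cast hk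
    have hkmR : (k:ℝ) ≤ (m:ℝ) := by exact_mod_cast hkm
    have hfac : (0:ℝ) ≤ ((m:ℝ) + 1) / ((k:ℝ) + 1) := by positivity
    have hstep : ((m:ℝ) + 1) / ((k:ℝ) + 1) ≤ (m:ℝ) / (k:ℝ) := by
      rw [div_le_div_iff₀ (by positivity) (by positivity)]
      nlinarith
    have hpow : (((m:ℝ) + 1) / ((k:ℝ) + 1)) ^ k ≤ ((m:ℝ) / (k:ℝ)) ^ k :=
      pow_le_pow_left₀ hfac hstep k
    have h1 : ((m + 1) * m.choose k : ℝ) = ((m + 1).choose (k + 1) : ℝ) * ((k:ℝ) + 1) := by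
      exact_mod_cast congrArg (Nat.cast (R := ℝ)) (Nat.add_one_mul_choose_eq m k)
    have hid : ((m + 1).choose (k + 1) : ℝ) = ((m:ℝ) + 1) * (m.choose k : ℝ) / ((k:ℝ) + 1) := by
      rw [eq_div_iff (by positivity)]
      push_cast at h1 ⊢
      linarith
    calc ((↑(m+1):ℝ) / (↑(k+1):ℝ)) ^ (k+1)
        = (((m:ℝ)+1)/((k:ℝ)+1)) * (((m:ℝ)+1)/((k:ℝ)+1)) ^ k := by push_cast; ring
      _ ≤ (((m:ℝ)+1)/((k:ℝ)+1)) * ((m:ℝ)/(k:ℝ)) ^ k :=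
          mul_le_mul_of_nonneg_left hpow hfac
      _ ≤ (((m:ℝ)+1)/((k:ℝ)+1)) * (m.choose k : ℝ) :=
          mul_le_mul_of_nonneg_left ihm hfac
      _ = ((m + 1).choose (k + 1) : ℝ) := by rw [hid]; ring

open Finset


/-- The one-bit restricted ensemble over the block sparsity model: the support
consists of `K` full columns of the `J × N` grid, half of the entries equal to `-ε`
and the other half equal to `√(2/(KJ)) + ε`. -/
noncomputable def F3block (J N K : ℕ) (ε : ℝ) : Set (Fin J × Fin N → ℝ) :=
  {β | ∃ L : Finset (Fin N), L.card = K ∧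
    ∃ A B : Finset (Fin J × Fin N), Disjoint A B ∧
      A ∪ B = Finset.univ ×ˢ L ∧
      A.card = K * J / 2 ∧ B.card = K * J / 2 ∧
      (∀ p ∈ A, β p = -ε) ∧ (∀ p ∈ B, β p = Real.sqrt (2 / (K * J : ℝ)) + ε) ∧
      ∀ p ∉ A ∪ B, β p = 0}

theorem card_F3block (J N K : ℕ) (hJ : 1 ≤ J) (hK1 : 1 ≤ K) (hKN : K ≤ N)
    (heven : Even (K * J)) (hKJ2 : 2 ≤ K * J) (ε : ℝ) (hε : 0 < ε) :
    (F3block J N K ε).Finite ∧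
      (F3block J N K ε).ncard = N.choose K * (K * J).choose (K * J / 2) ∧
      (2 : ℝ) ^ (K * J / 2) * ((N : ℝ) / (K : ℝ)) ^ K ≤ ((F3block J N K ε).ncard : ℝ) := by

  classical
  set v : ℝ := Real.sqrt (2 / (K * J : ℝ)) + ε with hv
  have hv0 : 0 < v := by
    rw [hv]; have := Real.sqrt_nonneg (2 / (K * J : ℝ)); linarith
  set Φ : (Σ _L : Finset (Fin N), Finset (Fin J × Fin N)) → (Fin J × Fin N → ℝ) :=
    fun x p => if p ∈ x.2 then -ε else if p ∈ (Finset.univ ×ˢ x.1) then v else 0 with hΦ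
  set T : Finset (Σ _L : Finset (Fin N), Finset (Fin J × Fin N)) :=
    (Finset.univ.powersetCard K).sigma
      (fun L => (Finset.univ ×ˢ L).powersetCard (K * J / 2)) with hT
  obtain ⟨mm, hmm⟩ := heven
  have hhalf : K * J / 2 = mm := by omega
  -- set equality
  have hset : {β : Fin J × Fin N → ℝ | ∃ L : Finset (Fin N), L.card = K ∧
      ∃ A B : Finset (Fin J × Fin N), Disjoint A B ∧
        A ∪ B = Finset.univ ×ˢ L ∧
        A.card = K * J / 2 ∧ B.card = K * J / 2 ∧
        (∀ p ∈ A, β p = -ε) ∧ (∀ p ∈ B, β p = Real.sqrt (2 / (K * J : ℝ)) + ε) ∧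
        ∀ p ∉ A ∪ B, β p = 0} = ↑(T.image Φ) := by
    ext β
    simp only [Set.mem_setOf_eq, coe_image, Set.mem_image, mem_coe, Finset.mem_sigma,
      Finset.mem_image]
    constructor
    · rintro ⟨L, hL, A, B, hdisj, hunion, hA, hB, hβA, hβB, hβ0⟩
      refine ⟨⟨L, A⟩, ?_, ?_⟩
      · simp only [hT, Finset.mem_sigma, Finset.mem_powersetCard]
        exact ⟨⟨Finset.subset_univ _, by simpa using hL⟩,
          ⟨hunion ▸ Finset.subset_union_left, hA⟩⟩
      · funext p
        simp only [hΦ]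
        by_cases hpA : p ∈ A
        · simp [hpA, hβA p hpA]
        · by_cases hpL : p ∈ Finset.univ ×ˢ L
          · have hpB : p ∈ B := by
              have := hunion ▸ hpL
              rcases Finset.mem_union.mp (by rw [hunion]; exact hpL) with h | h
              · exact absurd h hpA
              · exact h
            simp [hpA, hpL, hβB p hpB, hv]
          · have : p ∉ A ∪ B := by
              rw [hunion]; exact hpL
            simp [hpA, hpL, hβ0 p this]
    · rintro ⟨⟨L, A⟩, hmem, rfl⟩
      simp only [hT, Finset.mem_sigma, Finset.mem_powersetCard] at hmem
      obtain ⟨⟨-, hLcard⟩, hAsub, hAcard⟩ := hmem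
      refine ⟨L, by simpa using hLcard, A, (Finset.univ ×ˢ L) \ A,
        Finset.disjoint_sdiff, Finset.union_sdiff_of_subset hAsub, hAcard, ?_, ?_, ?_, ?_⟩
      · rw [Finset.card_sdiff_of_subset hAsub, Finset.card_product, Finset.card_univ,
          Fintype.card_fin]
        have : J * L.card = K * J := by rw [hLcard]; ring
        omega
      · intro p hp; simp [hΦ, hp]
      · intro p hp
        rw [Finset.mem_sdiff] at hp
        show (if p ∈ A then -ε else if p ∈ Finset.univ ×ˢ L then v else 0) = _
        rw [if_neg hp.2, if_pos hp.1, hv]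
      · intro p hp
        rw [Finset.union_sdiff_of_subset hAsub] at hp
        have hpA : p ∉ A := fun h => hp (hAsub h)
        show (if p ∈ A then -ε else if p ∈ Finset.univ ×ˢ L then v else 0) = 0
        rw [if_neg hpA, if_neg hp]
  -- injectivity on T
  have hinj : Set.InjOn Φ ↑T := by
    rintro ⟨L, A⟩ h1 ⟨L', A'⟩ h2 heq
    simp only [mem_coe, hT, Finset.mem_sigma, Finset.mem_powersetCard] at h1 h2
    have hvne : v ≠ -ε := by linarith
    have hzne : (0:ℝ) ≠ -ε := by linarith
    have hAkey : ∀ (x : Σ _L : Finset (Fin N), Finset (Fin J × Fin N)) (p),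
        Φ x p = -ε ↔ p ∈ x.2 := by
      intro x p
      simp only [hΦ]
      by_cases hp : p ∈ x.2
      · simp [hp]
      · by_cases hq : p ∈ Finset.univ ×ˢ x.1 <;> simp [hp, hq, hvne, hzne]
    have hAA : A = A' := by
      ext p
      rw [← hAkey ⟨L, A⟩ p, ← hAkey ⟨L', A'⟩ p, heq]
    have hLkey : ∀ (x : Σ _L : Finset (Fin N), Finset (Fin J × Fin N)),
        x.2 ⊆ Finset.univ ×ˢ x.1 → ∀ j, Φ x (⟨0, hJ⟩, j) ≠ 0 ↔ j ∈ x.1 := by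
      intro x hsub j
      simp only [hΦ]
      by_cases hp : (⟨(⟨0, hJ⟩ : Fin J), j⟩ : Fin J × Fin N) ∈ x.2
      · have := hsub hp
        simp only [Finset.mem_product, Finset.mem_univ, true_and] at this
        simp [hp, this]; linarith
      · by_cases hj : j ∈ x.1
        · simp [hp, hj, Finset.mem_product]; linarith
        · have : (⟨(⟨0, hJ⟩ : Fin J), j⟩ : Fin J × Fin N) ∉ Finset.univ ×ˢ x.1 := by
            simp [Finset.mem_product, hj]
          simp [hp, this, hj]
    have hLL : L = L' := by
      ext j
      rw [← hLkey ⟨L, A⟩ h1.2.1 j, ← hLkey ⟨L', A'⟩ h2.2.1 j, heq]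
    subst hAA; subst hLL; rfl
  -- card
  have hcard : T.card = N.choose K * (K * J).choose (K * J / 2) := by
    rw [hT, Finset.card_sigma]
    have : ∀ L ∈ Finset.powersetCard K (Finset.univ : Finset (Fin N)),
        (((Finset.univ : Finset (Fin J)) ×ˢ L).powersetCard (K * J / 2)).card
          = (K * J).choose (K * J / 2) := by
      intro L hL
      rw [Finset.mem_powersetCard] at hL
      rw [Finset.card_powersetCard, Finset.card_product, Finset.card_univ,
        Fintype.card_fin, hL.2, mul_comm]
    rw [Finset.sum_congr rfl this, Finset.sum_const, Finset.card_powersetCard,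
      Finset.card_univ, Fintype.card_fin, smul_eq_mul]
  have hF : F3block J N K ε = ↑(T.image Φ) := hset
  have hfin : (F3block J N K ε).Finite := by rw [hF]; exact (T.image Φ).finite_toSet
  have hnc : (F3block J N K ε).ncard = N.choose K * (K * J).choose (K * J / 2) := by
    rw [hF, Set.ncard_coe_finset, Finset.card_image_of_injOn hinj, hcard]
  refine ⟨hfin, hnc, ?_⟩
  rw [hnc]
  have h2 : (2:ℝ) ^ (K * J / 2) ≤ ((K * J).choose (K * J / 2) : ℝ) := by
    have : (K * J).choose (K * J / 2) = Nat.centralBinom mm := by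
      rw [Nat.centralBinom, hhalf]
      congr 1
      omega
    rw [this, hhalf]
    exact_mod_cast two_pow_le_centralBinom mm
  have h1 : ((N:ℝ) / (K:ℝ)) ^ K ≤ (N.choose K : ℝ) := pow_div_le_choose K N hKN
  push_cast
  calc (2:ℝ) ^ (K * J / 2) * ((N:ℝ)/(K:ℝ)) ^ K
      ≤ ((K * J).choose (K * J / 2) : ℝ) * (N.choose K : ℝ) :=
        mul_le_mul h2 h1 (by positivity) (by positivity)
    _ = (N.choose K : ℝ) * ((K * J).choose (K * J / 2) : ℝ) := by ring
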